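/- arXiv:2108.05327 — 3 statements merged into one kernel-verified Lean document; each statement's English description precedes it below -/
import Mathlib

section
/- Let K be a number field, p a prime, and suppose that for some residual degree κ the number of distinct prime ideals of 𝒪_K above p with residual degree κ exceeds the number of monic irreducible polynomials of degree κ over 𝔽_p. Then for every algebraic integer α ∈ 𝒪_K, the prime p divides the index [𝒪_K : ℤ[α]] (where the index is taken to be divisible by p if α does not generate K). In particular p divides disc(minpoly α)/d_K for every generator α. -/
/-!
If `p` does not divide `[𝒪_K : ℤ[α]]`, then `𝒪_K = ℤ[α] + p𝒪_K`, so for every prime `P ∣ p` the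
residue field `𝒪_K/P` is generated over `𝔽_p` by the image of `α`. Its minimal polynomial is then
monic irreducible of degree the residual degree of `P`, and it determines `P`: the membership
`g(α) ∈ P` of `g ∈ ℤ[X]` is read off from divisibility of `g mod p` by it, and modulo `p` every
element of `𝒪_K` has the form `g(α)`. Hence `P ↦ minpoly` injects the primes of residual degree
`κ` into the monic irreducible polynomials of degree `κ` over `𝔽_p`.
-/

open NumberField Polynomial

theorem AddSubgroup.exists_sub_nsmul_mem_of_coprime_index {G : Type*} [AddCommGroup G]
    (H : AddSubgroup G) {n : ℕ} (hn : H.index.Coprime n) (z : G) : ∃ w, z - n • w ∈ H := by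
  obtain ⟨q, hq⟩ := (Nat.Coprime.nsmul_right_bijective (G := G ⧸ H) hn).2 (z : G ⧸ H)
  obtain ⟨w, rfl⟩ := QuotientAddGroup.mk_surjective q
  exact ⟨w, QuotientAddGroup.eq_iff_sub_mem.mp hq.symm⟩

theorem exists_sub_aeval_mem_span_of_coprime_index {R : Type*} [CommRing R] (x : R) {n : ℕ}
    (hn : (Algebra.adjoin ℤ {x}).toSubring.toAddSubgroup.index.Coprime n) (z : R) :
    ∃ g : ℤ[X], z - aeval x g ∈ Ideal.span {(n : R)} := by
  obtain ⟨w, hw⟩ := AddSubgroup.exists_sub_nsmul_mem_of_coprime_index _ hn z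
  have hw : z - n • w ∈ Algebra.adjoin ℤ {x} := hw
  rw [Algebra.adjoin_singleton_eq_range_aeval] at hw
  obtain ⟨g, hg⟩ := hw
  refine ⟨g, ?_⟩
  rw [show aeval x g = z - n • w from hg, sub_sub_cancel, nsmul_eq_mul]
  exact Ideal.mul_mem_right w _ (Ideal.mem_span_singleton_self _)

theorem Polynomial.finite_setOf_natDegree_le (R : Type*) [CommRing R] [Finite R] (n : ℕ) :
    {f : R[X] | f.natDegree ≤ n}.Finite := by
  have : Finite (degreeLT R (n + 1)) := Finite.of_equiv _ (degreeLTEquiv R (n + 1)).toEquiv.symm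
  convert Set.toFinite (degreeLT R (n + 1) : Set R[X]) using 1
  ext f
  simp [degreeLT_succ_eq_degreeLE, mem_degreeLE, natDegree_le_iff_degree_le]

theorem minpoly.natDegree_eq_of_adjoin_eq_top {k F : Type*} [Field k] [Finite k] [CommRing F]
    [IsDomain F] [Finite F] [Algebra k F] {x : F} (hx : Algebra.adjoin k {x} = ⊤) {d : ℕ}
    (hcard : Nat.card F = Nat.card k ^ d) : (minpoly k x).natDegree = d := by
  have : Module.Finite k F := Module.Finite.of_finite
  rw [← PowerBasis.ofAdjoinEqTop_dim (IsIntegral.of_finite k x) hx, ← PowerBasis.finrank]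
  refine Nat.pow_right_injective (Finite.one_lt_card (α := k)) ?_
  change Nat.card k ^ _ = Nat.card k ^ d
  rw [← hcard, Module.natCard_eq_pow_finrank (K := k) (V := F)]

namespace Ideal

variable {R : Type*} [CommRing R]

section

variable {x : R} {I P P' : Ideal R}

theorem le_of_forall_aeval_mem (hgen : ∀ z, ∃ g : ℤ[X], z - aeval x g ∈ I) (hP : I ≤ P)
    (hP' : I ≤ P') (h : ∀ g : ℤ[X], aeval x g ∈ P → aeval x g ∈ P') : P ≤ P' := by
  intro z hz
  obtain ⟨g, hg⟩ := hgen z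
  have hgP : aeval x g ∈ P := by simpa using P.sub_mem hz (hP hg)
  simpa using P'.add_mem (hP' hg) (h g hgP)

theorem eq_of_forall_aeval_mem_iff (hgen : ∀ z, ∃ g : ℤ[X], z - aeval x g ∈ I) (hP : I ≤ P)
    (hP' : I ≤ P') (h : ∀ g : ℤ[X], aeval x g ∈ P ↔ aeval x g ∈ P') : P = P' :=
  le_antisymm (le_of_forall_aeval_mem hgen hP hP' fun g => (h g).1)
    (le_of_forall_aeval_mem hgen hP' hP fun g => (h g).2)

theorem adjoin_mk_eq_top {A : Type*} [CommRing A] [Algebra A (R ⧸ P)]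
    (hgen : ∀ z, ∃ g : ℤ[X], z - aeval x g ∈ I) (hP : I ≤ P) :
    Algebra.adjoin A {Quotient.mk P x} = ⊤ := by
  refine eq_top_iff.mpr fun y _ => ?_
  obtain ⟨z, rfl⟩ := Quotient.mk_surjective y
  obtain ⟨g, hg⟩ := hgen z
  have hz : Quotient.mk P z = aeval (Quotient.mk P x) (g.map (algebraMap ℤ A)) := by
    rw [aeval_map_algebraMap, ← Quotient.mkₐ_eq_mk ℤ, aeval_algHom_apply, Quotient.mkₐ_eq_mk,
      Quotient.eq]
    exact hP hg
  rw [hz]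
  exact aeval_mem_adjoin_singleton A _

theorem charP_quotient_of_natCast_mem {p : ℕ} (hp : p.Prime) (hP : P ≠ ⊤) (h : (p : R) ∈ P) :
    CharP (R ⧸ P) p :=
  have := Quotient.nontrivial_iff.mpr hP
  (CharP.charP_iff_prime_eq_zero hp).mpr (by simpa using Quotient.eq_zero_iff_mem.mpr h)

end

section ResidueMinpoly

variable (p : ℕ) (P : Ideal R) [CharP (R ⧸ P) p]

noncomputable def residueMinpoly (x : R) : (ZMod p)[X] :=
  letI := ZMod.algebra (R ⧸ P) p
  minpoly (ZMod p) (Quotient.mk P x)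

variable [Fact p.Prime]

theorem residueMinpoly_dvd_iff (x : R) (g : ℤ[X]) :
    residueMinpoly p P x ∣ g.map (Int.castRingHom (ZMod p)) ↔ aeval x g ∈ P := by
  let := ZMod.algebra (R ⧸ P) p
  rw [residueMinpoly, minpoly.dvd_iff, ← algebraMap_int_eq, aeval_map_algebraMap,
    ← Quotient.mkₐ_eq_mk ℤ, aeval_algHom_apply, Quotient.mkₐ_eq_mk, Quotient.eq_zero_iff_mem]

theorem residueMinpoly_spec [P.IsPrime] {x : R} {I : Ideal R} {κ : ℕ}
    (hcard : Nat.card (R ⧸ P) = p ^ κ) (hgen : ∀ z, ∃ g : ℤ[X], z - aeval x g ∈ I) (hP : I ≤ P) :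
    (residueMinpoly p P x).Monic ∧ Irreducible (residueMinpoly p P x) ∧
      (residueMinpoly p P x).natDegree = κ := by
  let := ZMod.algebra (R ⧸ P) p
  have : Finite (R ⧸ P) :=
    Nat.finite_of_card_ne_zero (hcard ▸ pow_ne_zero κ (Fact.out : p.Prime).ne_zero)
  have hint : IsIntegral (ZMod p) (Quotient.mk P x) := IsIntegral.of_finite _ _
  refine ⟨minpoly.monic hint, minpoly.irreducible hint, ?_⟩
  exact minpoly.natDegree_eq_of_adjoin_eq_top (adjoin_mk_eq_top hgen hP)
    (by rw [hcard, Nat.card_zmod])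

end ResidueMinpoly

end Ideal

theorem common_index_divisor_of_too_many_primes_general
    (K : Type*) [Field K] [NumberField K] (p κ : ℕ) (hp : p.Prime)
    (h : Nat.card {f : (ZMod p)[X] // f.Monic ∧ Irreducible f ∧ f.natDegree = κ}
        < Nat.card {P : Ideal (𝓞 K) //
            P.IsPrime ∧ (p : 𝓞 K) ∈ P ∧ Ideal.absNorm P = p ^ κ}) :
    ∀ α : 𝓞 K, p ∣ ((Algebra.adjoin ℤ {α}).toSubring.toAddSubgroup.index) := by
  intro α
  by_contra hdvd
  have : Fact p.Prime := ⟨hp⟩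
  have hgen := exists_sub_aeval_mem_span_of_coprime_index α
    (Nat.coprime_comm.mp (hp.coprime_iff_not_dvd.mpr hdvd))
  have hspan (P : Ideal (𝓞 K)) (hpP : (p : 𝓞 K) ∈ P) : Ideal.span {(p : 𝓞 K)} ≤ P :=
    (Ideal.span_singleton_le_iff_mem _).mpr hpP
  let Φ : {P : Ideal (𝓞 K) // P.IsPrime ∧ (p : 𝓞 K) ∈ P ∧ Ideal.absNorm P = p ^ κ} →
      {f : (ZMod p)[X] // f.Monic ∧ Irreducible f ∧ f.natDegree = κ} := fun P =>
    have := P.2.1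
    have := Ideal.charP_quotient_of_natCast_mem hp P.2.1.ne_top P.2.2.1
    ⟨P.1.residueMinpoly p α, P.1.residueMinpoly_spec p P.2.2.2 hgen (hspan _ P.2.2.1)⟩
  have hΦ : Φ.Injective := fun P P' hPP' => by
    have := Ideal.charP_quotient_of_natCast_mem hp P.2.1.ne_top P.2.2.1
    have := Ideal.charP_quotient_of_natCast_mem hp P'.2.1.ne_top P'.2.2.1
    refine Subtype.ext <|
      Ideal.eq_of_forall_aeval_mem_iff hgen (hspan _ P.2.2.1) (hspan _ P'.2.2.1) fun g => ?_
    rw [← Ideal.residueMinpoly_dvd_iff p, ← Ideal.residueMinpoly_dvd_iff p]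
    exact iff_of_eq (congrArg (· ∣ _) (congrArg Subtype.val hPP'))
  have : Finite {f : (ZMod p)[X] // f.Monic ∧ Irreducible f ∧ f.natDegree = κ} :=
    ((finite_setOf_natDegree_le (ZMod p) κ).subset fun f hf => hf.2.2.le).to_subtype
  exact (Nat.card_le_card_of_injective Φ hΦ).not_gt h

/-- If for some residual degree `κ` the number of distinct primes of `𝒪_K` above `p`
with residual degree `κ` exceeds the number of monic irreducible polynomials of degree
`κ` over `𝔽_p`, then `p` divides the index `[𝒪_K : ℤ[α]]` for every `α ∈ 𝒪_K`
(the index being `0`, hence divisible by `p`, when `ℤ[α]` has infinite index). -/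
theorem common_index_divisor_of_too_many_primes
    (K : Type*) [Field K] [NumberField K] (p κ : ℕ) (hp : p.Prime) (hκ : 0 < κ)
    (h : Nat.card {f : (ZMod p)[X] // f.Monic ∧ Irreducible f ∧ f.natDegree = κ}
        < Nat.card {P : Ideal (𝓞 K) //
            P.IsPrime ∧ (p : 𝓞 K) ∈ P ∧ Ideal.absNorm P = p ^ κ}) :
    ∀ α : 𝓞 K, p ∣ ((Algebra.adjoin ℤ {α}).toSubring.toAddSubgroup.index) :=
  common_index_divisor_of_too_many_primes_general K p κ hp h
end

section
/- A polynomial U ∈ ℤ[u₁, …, u_n] takes values divisible by the prime p for all integer values of the variables if and only if U lies in the ideal of ℤ[u₁,…,u_n] generated by p, u₁^p − u₁, …, u_n^p − u_n. -/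
/-!
Modulo the ideal generated by the `X i ^ p - X i`, every polynomial is congruent to one of degree
less than `p` in each variable. If all values of `U` are divisible by `p`, so are those of such a
reduction `R`; hence `R mod p` is a polynomial over `𝔽_p` of degree `< p` in each variable that
vanishes on all of `𝔽_pⁿ`, so it is zero and `p ∣ R`. The converse is Fermat's little theorem.
-/

namespace MvPolynomial

variable {σ R : Type*} [CommRing R]

theorem monomial_mem_restrictDegree {m : ℕ} {e : σ →₀ ℕ} (he : ∀ i, e i ≤ m) (c : R) :
    monomial e c ∈ restrictDegree σ R m :=
  Finsupp.single_mem_supported R c he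

theorem monomial_add_single_sub_mem_span_X_pow_sub_X (d : ℕ) (e : σ →₀ ℕ) (i : σ) :
    monomial (e + Finsupp.single i d) (1 : R) - monomial (e + Finsupp.single i 1) 1 ∈
      Ideal.span (Set.range fun i => X i ^ d - X i) := by
  rw [monomial_add_single, monomial_add_single, pow_one, ← mul_sub]
  exact Ideal.mul_mem_left _ _ (Ideal.subset_span ⟨i, rfl⟩)

theorem restrictDegree_sup_span_X_pow_sub_X_eq_top {d : ℕ} (hd : 2 ≤ d) :
    restrictDegree σ R (d - 1) ⊔
      (Ideal.span (Set.range fun i => X i ^ d - X i)).restrictScalars R = ⊤ := by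
  set M := restrictDegree σ R (d - 1) ⊔
    (Ideal.span (Set.range fun i => X i ^ d - X i)).restrictScalars R
  have monomial_mem (e : σ →₀ ℕ) : monomial e (1 : R) ∈ M := by
    induction hdeg : e.degree using Nat.strong_induction_on generalizing e with
    | _ k ih =>
    by_cases he : ∀ i, e i ≤ d - 1
    · exact Submodule.mem_sup_left (monomial_mem_restrictDegree he 1)
    obtain ⟨i, hi⟩ := not_forall.mp he
    obtain ⟨e', rfl⟩ : ∃ e', e = e' + Finsupp.single i d :=
      ⟨e - Finsupp.single i d, (tsub_add_cancel_of_le (Finsupp.single_le_iff.mpr (by omega))).symm⟩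
    have hlt : (e' + Finsupp.single i 1).degree < k := by
      simp only [← hdeg, map_add, Finsupp.degree_single]
      omega
    rw [← sub_add_cancel (monomial _ _) (monomial (e' + Finsupp.single i 1) 1)]
    exact add_mem (Submodule.mem_sup_right (monomial_add_single_sub_mem_span_X_pow_sub_X d e' i))
      (ih _ hlt _ rfl)
  refine Submodule.eq_top_iff'.mpr fun f => ?_
  induction f using MvPolynomial.induction_on' with
  | monomial e c =>
    rw [← mul_one c, ← smul_eq_mul, ← smul_monomial]
    exact M.smul_mem c (monomial_mem e)
  | add f g hf hg => exact add_mem hf hg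

theorem dvd_eval_of_mem_span {p : ℕ} [Fact p.Prime] {f : MvPolynomial σ ℤ}
    (hf : f ∈ Ideal.span (insert (C (p : ℤ)) (Set.range fun i => X i ^ p - X i)))
    (a : σ → ℤ) : (p : ℤ) ∣ eval a f := by
  rw [← ZMod.intCast_zmod_eq_zero_iff_dvd, ← eq_intCast (Int.castRingHom (ZMod p)),
    ← RingHom.comp_apply, ← RingHom.mem_ker]
  refine Ideal.span_le.mpr ?_ hf
  rintro _ (rfl | ⟨i, rfl⟩)
  · simp
  · simp [ZMod.pow_card]

-- `σ : Type` because `eq_zero_of_eval_eq_zero` needs `σ` in the universe of `ZMod p`.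
theorem C_dvd_of_forall_dvd_eval {σ : Type} [Finite σ] {p : ℕ} [Fact p.Prime]
    {f : MvPolynomial σ ℤ} (hf : f ∈ restrictDegree σ ℤ (p - 1))
    (h : ∀ a : σ → ℤ, (p : ℤ) ∣ eval a f) :
    C (p : ℤ) ∣ f := by
  rw [C_dvd_iff_zmod]
  refine eq_zero_of_eval_eq_zero _ _ _ (fun v => ?_) ?_
  · have hv : v = Int.castRingHom (ZMod p) ∘ fun i => ((v i).val : ℤ) := by
      ext i; simp
    rw [hv, eval_map, ← eval₂_comp, eq_intCast, ZMod.intCast_zmod_eq_zero_iff_dvd]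
    exact h _
  · rw [ZMod.card]
    exact (mem_restrictDegree _ _ _).mpr fun s hs => (mem_restrictDegree _ _ _).mp hf s
      (support_map_subset _ _ hs)

end MvPolynomial

open MvPolynomial

/-- A polynomial `U ∈ ℤ[u₁,…,uₙ]` takes values divisible by the prime `p` at all integer
points iff `U` lies in the ideal generated by `p, u₁^p−u₁, …, uₙ^p−uₙ`. -/
theorem dvd_all_values_iff_mem_span (p : ℕ) (hp : p.Prime) (n : ℕ)
    (U : MvPolynomial (Fin n) ℤ) :
    (∀ a : Fin n → ℤ, (p : ℤ) ∣ eval a U) ↔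
      U ∈ Ideal.span (insert (C (p : ℤ))
        (Set.range fun i : Fin n => (X i) ^ p - X i)) := by
  have := Fact.mk hp
  refine ⟨fun hU => ?_, fun hU a => dvd_eval_of_mem_span hU a⟩
  have hJ : Ideal.span (Set.range fun i : Fin n => (X i : MvPolynomial (Fin n) ℤ) ^ p - X i) ≤
      Ideal.span (insert (C (p : ℤ)) (Set.range fun i => X i ^ p - X i)) :=
    Ideal.span_mono (Set.subset_insert _ _)
  have hUmem : U ∈ restrictDegree (Fin n) ℤ (p - 1) ⊔
      (Ideal.span (Set.range fun i => X i ^ p - X i)).restrictScalars ℤ := by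
    rw [restrictDegree_sup_span_X_pow_sub_X_eq_top hp.two_le]
    trivial
  obtain ⟨R, hR, j, hj, rfl⟩ := Submodule.mem_sup.mp hUmem
  have hRval (a : Fin n → ℤ) : (p : ℤ) ∣ eval a R := by
    simpa using dvd_sub (hU a) (dvd_eval_of_mem_span (hJ hj) a)
  obtain ⟨Q, rfl⟩ := C_dvd_of_forall_dvd_eval hR hRval
  exact add_mem (Ideal.mul_mem_right _ _ (Ideal.subset_span (Set.mem_insert _ _))) (hJ hj)
end

section
/- Let K be the cubic field defined by α³ − α² − 2α − 8 = 0 (Dedekind's field). Then 2 is a common index divisor of K: for every algebraic integer θ ∈ 𝒪_K generating K over ℚ, the index [𝒪_K : ℤ[θ]] is even. -/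
/-!
Put `a = α` and `b = (α² + α) / 2`. Both are algebraic integers, with `a² = 2b - a`,
`ab = 2b + 4`, `b² = 3b + 2a + 6` and traces `Tr 1 = 3`, `Tr a = 1`, `Tr b = 3`. If
`d₀ + d₁a + d₂b = 2v` with `v` integral, the integrality of `Tr v`, `Tr (av)`, `Tr (bv)` forces
all `dᵢ` to be even, so `1, a, b` are independent in `𝒪_K / 2`, which has `2³` elements. Hence they
span it, and since `a` and `b` are idempotent mod `2`, every element of the characteristic-`2`
ring `𝒪_K / 2` is idempotent. If `[𝒪_K : ℤ[θ]]` were odd, `ℤ[θ]` would map onto `𝒪_K / 2`, which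
would then be generated by the single idempotent `θ mod 2` and so have at most `4` elements.
-/

open NumberField Polynomial Module IntermediateField

theorem AddSubgroup.exists_mem_add_nsmul_of_coprime_index {G : Type*} [AddCommGroup G]
    (H : AddSubgroup G) {n : ℕ} (hn : H.index.Coprime n) (x : G) :
    ∃ w ∈ H, ∃ v : G, x = w + n • v := by
  obtain ⟨u, v, huv⟩ := Nat.isCoprime_iff_coprime.mpr hn
  refine ⟨u • H.index • x, H.zsmul_mem (H.nsmul_index_mem x) u, v • x, ?_⟩
  conv_lhs => rw [← one_smul ℤ x, ← huv]
  module

theorem Algebra.adjoin_singleton_mk_eq_top_of_coprime_index {A : Type*} [CommRing A]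
    {I : Ideal A} {n : ℕ} (hn : (n : A) ∈ I) {θ : A}
    (hθ : (Algebra.adjoin ℤ {θ}).toSubring.toAddSubgroup.index.Coprime n) :
    Algebra.adjoin ℤ {Ideal.Quotient.mk I θ} = ⊤ := by
  rw [← Ideal.Quotient.mkₐ_eq_mk ℤ, ← AlgHom.map_adjoin_singleton, Algebra.eq_top_iff]
  intro y
  obtain ⟨x, rfl⟩ := Ideal.Quotient.mk_surjective y
  obtain ⟨w, hw, v, rfl⟩ := AddSubgroup.exists_mem_add_nsmul_of_coprime_index _ hθ x
  refine ⟨w, hw, ?_⟩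
  rw [AlgHom.coe_toRingHom, Ideal.Quotient.mkₐ_eq_mk, map_add, nsmul_eq_mul, map_mul,
    Ideal.Quotient.eq_zero_iff_mem.mpr hn, zero_mul, add_zero]

section Idempotent

variable {B : Type*} [CommRing B]

theorem IsIdempotentElem.exists_eq_intCast_add_intCast_mul {t : B} (ht : IsIdempotentElem t)
    {x : B} (hx : x ∈ Algebra.adjoin ℤ {t}) : ∃ n m : ℤ, x = n + m * t := by
  induction hx using Algebra.adjoin_induction with
  | mem x hx => exact ⟨0, 1, by rw [Set.mem_singleton_iff.mp hx]; simp⟩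
  | algebraMap r => exact ⟨r, 0, by simp⟩
  | add x y _ _ hx hy =>
    obtain ⟨n, m, rfl⟩ := hx
    obtain ⟨n', m', rfl⟩ := hy
    exact ⟨n + n', m + m', by push_cast; ring⟩
  | mul x y _ _ hx hy =>
    obtain ⟨n, m, rfl⟩ := hx
    obtain ⟨n', m', rfl⟩ := hy
    exact ⟨n * n', n * m' + m * n' + m * m', by push_cast; linear_combination (m * m' : B) * ht.eq⟩

theorem intCast_eq_natCast_zmod_val {p : ℕ} [NeZero p] (hp : (p : B) = 0) (n : ℤ) :
    (n : B) = ((n : ZMod p).val : B) := by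
  rw [← Int.cast_natCast, ZMod.val_intCast]
  conv_lhs => rw [← Int.emod_add_mul_ediv n p]
  push_cast
  rw [hp, zero_mul, add_zero]

theorem natCard_le_sq_of_adjoin_idempotent_eq_top {p : ℕ} [NeZero p] (hp : (p : B) = 0) {t : B}
    (ht : IsIdempotentElem t) (htop : Algebra.adjoin ℤ {t} = ⊤) : Nat.card B ≤ p ^ 2 := by
  let f : ZMod p × ZMod p → B := fun c => (c.1.val : B) + (c.2.val : B) * t
  have hf : Function.Surjective f := by
    intro x
    obtain ⟨n, m, rfl⟩ := ht.exists_eq_intCast_add_intCast_mul (htop ▸ Algebra.mem_top : x ∈ _)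
    exact ⟨(n, m), by simp only [f, ← intCast_eq_natCast_zmod_val hp]⟩
  calc Nat.card B ≤ Nat.card (ZMod p × ZMod p) := Nat.card_le_card_of_surjective f hf
    _ = p ^ 2 := by rw [Nat.card_prod, Nat.card_zmod, sq]

theorem IsIdempotentElem.add_of_two_eq_zero (h2 : (2 : B) = 0) {x y : B}
    (hx : IsIdempotentElem x) (hy : IsIdempotentElem y) : IsIdempotentElem (x + y) :=
  hx.add hy (by rw [mul_comm y, ← two_mul, h2, zero_mul])

end Idempotent

section FreeOverInt

variable {A : Type*} [CommRing A] [Module.Free ℤ A]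

theorem natCard_quotient_span_natCast [Module.Finite ℤ A] (n : ℕ) :
    Nat.card (A ⧸ Ideal.span {(n : A)}) = n ^ finrank ℤ A := by
  have : (Ideal.span {(n : A)}).toAddSubgroup = (nsmulAddMonoidHom (α := A) n).range := by
    ext x
    simp [Ideal.mem_span_singleton', nsmul_eq_mul, mul_comm]
  rw [← AddSubgroup.index_range_nsmul, ← this]
  rfl

theorem two_dvd_of_mem_span_two (hrank : finrank ℤ A = 3) {a b : A} (ha2 : a ^ 2 = 2 * b - a)
    (hab : a * b = 2 * b + 4) (hb2 : b ^ 2 = 3 * b + 2 * a + 6)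
    (hta : Algebra.trace ℤ A a = 1) (htb : Algebra.trace ℤ A b = 3) {d₀ d₁ d₂ : ℤ}
    (h : (d₀ : A) + d₁ * a + d₂ * b ∈ Ideal.span {2}) :
    2 ∣ d₀ ∧ 2 ∣ d₁ ∧ 2 ∣ d₂ := by
  have trace_comb (n₀ n₁ n₂ : ℤ) :
      Algebra.trace ℤ A (n₀ + n₁ * a + n₂ * b) = 3 * n₀ + n₁ + 3 * n₂ := by
    rw [← map_intCast (algebraMap ℤ A) n₀]
    simp only [map_add, ← zsmul_eq_mul, map_zsmul, hta, htb, Algebra.trace_algebraMap, hrank,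
      smul_eq_mul, nsmul_eq_mul, Int.cast_id, Nat.cast_ofNat]
    ring
  have trace_two_mul (x : A) : Algebra.trace ℤ A (2 * x) = 2 * Algebra.trace ℤ A x := by
    rw [two_mul, map_add, two_mul]
  obtain ⟨v, hv⟩ := Ideal.mem_span_singleton'.mp h
  have e₁ : 2 * Algebra.trace ℤ A v = 3 * d₀ + d₁ + 3 * d₂ := by
    rw [← trace_two_mul, mul_comm, hv, trace_comb]
  have e₂ : 2 * Algebra.trace ℤ A (a * v) = d₀ + 5 * d₁ + 18 * d₂ := by
    rw [← trace_two_mul, show 2 * (a * v) = ((4 * d₂ : ℤ) : A) + ((d₀ - d₁ : ℤ) : A) * a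
        + ((2 * d₁ + 2 * d₂ : ℤ) : A) * b by
      push_cast; linear_combination a * hv + d₁ * ha2 + d₂ * hab, trace_comb]
    ring
  have e₃ : 2 * Algebra.trace ℤ A (b * v) = 3 * d₀ + 18 * d₁ + 29 * d₂ := by
    rw [← trace_two_mul, show 2 * (b * v) = ((4 * d₁ + 6 * d₂ : ℤ) : A) + ((2 * d₂ : ℤ) : A) * a
        + ((d₀ + 2 * d₁ + 3 * d₂ : ℤ) : A) * b by
      push_cast; linear_combination b * hv + d₁ * hab + d₂ * hb2, trace_comb]
    ring
  -- modulo 2: `d₀ + d₁ + d₂`, `d₀ + d₁` and `d₀ + d₂` are even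
  omega

theorem isIdempotentElem_quotient_span_two [Module.Finite ℤ A] (hrank : finrank ℤ A = 3)
    {a b : A} (ha2 : a ^ 2 = 2 * b - a) (hab : a * b = 2 * b + 4) (hb2 : b ^ 2 = 3 * b + 2 * a + 6)
    (hta : Algebra.trace ℤ A a = 1) (htb : Algebra.trace ℤ A b = 3)
    (y : A ⧸ Ideal.span {(2 : A)}) : IsIdempotentElem y := by
  set π := Ideal.Quotient.mk (Ideal.span {(2 : A)})
  have h2 : (2 : A ⧸ Ideal.span {(2 : A)}) = 0 := by
    rw [← map_ofNat π 2, Ideal.Quotient.mk_singleton_self]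
  have hπa : IsIdempotentElem (π a) := by
    have e := congrArg π ha2
    simp only [map_pow, map_sub, map_mul, map_ofNat] at e
    unfold IsIdempotentElem
    linear_combination e + (π b - π a) * h2
  have hπb : IsIdempotentElem (π b) := by
    have e := congrArg π hb2
    simp only [map_pow, map_add, map_mul, map_ofNat] at e
    unfold IsIdempotentElem
    linear_combination e + (π b + π a + 3) * h2
  have hcoef (i : Fin 2) : IsIdempotentElem ((i : ℕ) : A ⧸ Ideal.span {(2 : A)}) := by
    fin_cases i <;> simp [IsIdempotentElem]
  let g : Fin 2 × Fin 2 × Fin 2 → A ⧸ Ideal.span {(2 : A)} :=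
    fun c => π ((c.1 : ℕ) + (c.2.1 : ℕ) * a + (c.2.2 : ℕ) * b)
  have hg : Function.Injective g := by
    rintro ⟨c₀, c₁, c₂⟩ ⟨c₀', c₁', c₂'⟩ hcc
    obtain ⟨h₀, h₁, h₂⟩ := two_dvd_of_mem_span_two hrank ha2 hab hb2 hta htb
      (d₀ := (c₀ : ℕ) - (c₀' : ℕ)) (d₁ := (c₁ : ℕ) - (c₁' : ℕ)) (d₂ := (c₂ : ℕ) - (c₂' : ℕ))
      (by convert Ideal.Quotient.eq.mp hcc using 1; push_cast; ring)
    simp only [Prod.mk.injEq, Fin.ext_iff]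
    omega
  have hcard : Nat.card (A ⧸ Ideal.span {(2 : A)}) = 8 := by
    simpa [hrank] using natCard_quotient_span_natCast (A := A) 2
  have : Finite (A ⧸ Ideal.span {(2 : A)}) := Nat.finite_of_card_ne_zero (by rw [hcard]; norm_num)
  obtain ⟨⟨c₀, c₁, c₂⟩, rfl⟩ := (hg.bijective_of_nat_card_le (by simp [hcard])).surjective y
  simp only [g, map_add, map_mul, map_natCast]
  exact ((hcoef c₀).add_of_two_eq_zero h2 ((hcoef c₁).mul hπa)).add_of_two_eq_zero h2
    ((hcoef c₂).mul hπb)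

end FreeOverInt

theorem Int.cubic_ne_zero_of_forall_zmod {k : ℕ} {p q r : ℤ}
    (h : ∀ m : ZMod k, m ^ 3 + p * m ^ 2 + q * m + r ≠ 0) (n : ℤ) :
    n ^ 3 + p * n ^ 2 + q * n + r ≠ 0 := fun hn =>
  h n (by exact_mod_cast congrArg (Int.cast : ℤ → ZMod k) hn)

section Cubic

variable {R : Type*} [CommRing R]

theorem Polynomial.monic_cubic (a b c : R) : (X ^ 3 + C a * X ^ 2 + C b * X + C c).Monic := by
  monicity!

theorem Polynomial.natDegree_monic_cubic [Nontrivial R] (a b c : R) :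
    (X ^ 3 + C a * X ^ 2 + C b * X + C c).natDegree = 3 := by
  compute_degree!

theorem Polynomial.nextCoeff_monic_cubic [Nontrivial R] (a b c : R) :
    (X ^ 3 + C a * X ^ 2 + C b * X + C c).nextCoeff = a := by
  rw [nextCoeff_of_natDegree_pos (by rw [natDegree_monic_cubic]; norm_num), natDegree_monic_cubic]
  simp only [coeff_add, coeff_C_mul, coeff_X_pow, coeff_X, coeff_C]
  norm_num

theorem isIntegral_of_cubic {p q r : ℤ} {x : R} (hx : x ^ 3 + p * x ^ 2 + q * x + r = 0) :
    IsIntegral ℤ x :=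
  ⟨(X ^ 3 + C p * X ^ 2 + C q * X + C r : ℤ[X]), monic_cubic p q r, by
    rw [← aeval_def]; simpa using hx⟩

end Cubic

theorem Algebra.trace_eq_neg_nextCoeff_of_natDegree_minpoly {F E : Type*} [Field F] [Field E]
    [Algebra F E] [FiniteDimensional F E] {x : E} (hx : (minpoly F x).natDegree = finrank F E) :
    Algebra.trace F E x = -(minpoly F x).nextCoeff := by
  have h := Module.finrank_mul_finrank F F⟮x⟯ E
  rw [IntermediateField.adjoin.finrank (.of_finite F x), hx] at h
  have : finrank F⟮x⟯ E = 1 := by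
    have hpos : 0 < finrank F E := Module.finrank_pos
    nlinarith
  rw [trace_eq_finrank_mul_minpoly_nextCoeff, this, Nat.cast_one, one_mul]

section RationalCubic

variable {L : Type*} [Field L] [Algebra ℚ L] {p q r : ℤ}

theorem Polynomial.irreducible_cubic_of_forall_int_ne_zero
    (h : ∀ n : ℤ, n ^ 3 + p * n ^ 2 + q * n + r ≠ 0) :
    Irreducible (X ^ 3 + C (p : ℚ) * X ^ 2 + C (q : ℚ) * X + C (r : ℚ)) := by
  rw [irreducible_iff_roots_eq_zero_of_degree_le_three (by rw [natDegree_monic_cubic]; norm_num)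
    (by rw [natDegree_monic_cubic]), Multiset.eq_zero_iff_forall_notMem]
  intro y hy
  rw [mem_roots (monic_cubic _ _ _).ne_zero, IsRoot.def] at hy
  simp only [eval_add, eval_pow, eval_mul, eval_X, eval_C] at hy
  obtain ⟨n, rfl⟩ := IsIntegrallyClosed.isIntegral_iff.mp (isIntegral_of_cubic hy)
  rw [algebraMap_int_eq, eq_intCast] at hy
  exact h n (by exact_mod_cast hy)

theorem minpoly_eq_cubic (h : ∀ n : ℤ, n ^ 3 + p * n ^ 2 + q * n + r ≠ 0) {x : L}
    (hx : x ^ 3 + p * x ^ 2 + q * x + r = 0) :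
    minpoly ℚ x = X ^ 3 + C (p : ℚ) * X ^ 2 + C (q : ℚ) * X + C (r : ℚ) :=
  (minpoly.eq_of_irreducible_of_monic (irreducible_cubic_of_forall_int_ne_zero h)
    (by simpa using hx) (monic_cubic _ _ _)).symm

theorem finrank_eq_three_of_cubic (h : ∀ n : ℤ, n ^ 3 + p * n ^ 2 + q * n + r ≠ 0) {x : L}
    (hx : x ^ 3 + p * x ^ 2 + q * x + r = 0) (hgen : Algebra.adjoin ℚ {x} = ⊤) :
    finrank ℚ L = 3 := by
  rw [(PowerBasis.ofAdjoinEqTop (isIntegral_of_cubic hx).tower_top hgen).finrank,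
    PowerBasis.ofAdjoinEqTop_dim, minpoly_eq_cubic h hx, natDegree_monic_cubic]

theorem trace_eq_neg_of_cubic (hL : finrank ℚ L = 3)
    (h : ∀ n : ℤ, n ^ 3 + p * n ^ 2 + q * n + r ≠ 0) {x : L}
    (hx : x ^ 3 + p * x ^ 2 + q * x + r = 0) : Algebra.trace ℚ L x = -p := by
  have : FiniteDimensional ℚ L := .of_finrank_eq_succ hL
  rw [Algebra.trace_eq_neg_nextCoeff_of_natDegree_minpoly, minpoly_eq_cubic h hx,
    nextCoeff_monic_cubic]
  rw [minpoly_eq_cubic h hx, natDegree_monic_cubic, hL]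

end RationalCubic

theorem exists_dedekind_integers {K : Type*} [Field K] [NumberField K] {α : K}
    (hα : α ^ 3 - α ^ 2 - 2 * α - 8 = 0) (hK : finrank ℚ K = 3) :
    ∃ a b : 𝓞 K, a ^ 2 = 2 * b - a ∧ a * b = 2 * b + 4 ∧ b ^ 2 = 3 * b + 2 * a + 6 ∧
      Algebra.trace ℤ (𝓞 K) a = 1 ∧ Algebra.trace ℤ (𝓞 K) b = 3 := by
  have hα_cubic : α ^ 3 + ((-1 : ℤ) : K) * α ^ 2 + ((-2 : ℤ) : K) * α + ((-8 : ℤ) : K) = 0 := by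
    push_cast
    linear_combination hα
  have hβ_cubic : ((α ^ 2 + α) / 2) ^ 3 + ((-3 : ℤ) : K) * ((α ^ 2 + α) / 2) ^ 2
      + ((-10 : ℤ) : K) * ((α ^ 2 + α) / 2) + ((-8 : ℤ) : K) = 0 := by
    push_cast
    linear_combination (1 + 3 / 8 * α + 1 / 2 * α ^ 2 + 1 / 8 * α ^ 3) * hα
  have hα_root :=
    Int.cubic_ne_zero_of_forall_zmod (k := 3) (p := -1) (q := -2) (r := -8) (by decide)
  have hβ_root :=
    Int.cubic_ne_zero_of_forall_zmod (k := 3) (p := -3) (q := -10) (r := -8) (by decide)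
  obtain ⟨a, rfl⟩ : ∃ a : 𝓞 K, (a : K) = α :=
    ⟨⟨α, (mem_integralClosure_iff ℤ K).mpr (isIntegral_of_cubic hα_cubic)⟩, rfl⟩
  obtain ⟨b, hb⟩ : ∃ b : 𝓞 K, (b : K) = ((a : K) ^ 2 + a) / 2 :=
    ⟨⟨_, (mem_integralClosure_iff ℤ K).mpr (isIntegral_of_cubic hβ_cubic)⟩, rfl⟩
  have hcast (n : ℕ) [n.AtLeastTwo] : ((OfNat.ofNat n : 𝓞 K) : K) = OfNat.ofNat n := map_ofNat _ n
  refine ⟨a, b, ?_, ?_, ?_, ?_, ?_⟩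
  · ext; push_cast [hb, hcast]; ring
  · ext; push_cast [hb, hcast]; linear_combination hα / 2
  · ext; push_cast [hb, hcast]; linear_combination (3 + (a : K)) / 4 * hα
  · apply Int.cast_injective (α := ℚ)
    rw [Algebra.coe_trace_int, trace_eq_neg_of_cubic hK hα_root hα_cubic]
    norm_num
  · apply Int.cast_injective (α := ℚ)
    rw [Algebra.coe_trace_int, hb, trace_eq_neg_of_cubic hK hβ_root hβ_cubic]
    norm_num

/-- In Dedekind's cubic field `K = ℚ(α)` with `α³ − α² − 2α − 8 = 0`, the prime `2` is a
common index divisor: every generator `θ ∈ 𝒪_K` of `K` has even index `[𝒪_K : ℤ[θ]]`. -/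
theorem two_common_index_divisor_dedekind
    (K : Type*) [Field K] [NumberField K] (α : K)
    (hα : α ^ 3 - α ^ 2 - 2 * α - 8 = 0)
    (hgen : Algebra.adjoin ℚ {α} = ⊤) :
    ∀ θ : 𝓞 K, Algebra.adjoin ℚ {(algebraMap (𝓞 K) K θ)} = ⊤ →
      2 ∣ ((Algebra.adjoin ℤ {θ}).toSubring.toAddSubgroup.index) := by
  intro θ _
  have hK : finrank ℚ K = 3 :=
    finrank_eq_three_of_cubic (p := -1) (q := -2) (r := -8)
      (Int.cubic_ne_zero_of_forall_zmod (k := 3) (by decide)) (by push_cast; linear_combination hα)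
      hgen
  have hrank : finrank ℤ (𝓞 K) = 3 := (RingOfIntegers.rank K).trans hK
  obtain ⟨a, b, ha2, hab, hb2, hta, htb⟩ := exists_dedekind_integers hα hK
  by_contra hodd
  have htop := Algebra.adjoin_singleton_mk_eq_top_of_coprime_index
    (I := Ideal.span {(2 : 𝓞 K)}) (n := 2) (by simp)
    (Nat.coprime_comm.mp ((Nat.prime_two.coprime_iff_not_dvd).mpr hodd))
  have hle := natCard_le_sq_of_adjoin_idempotent_eq_top (p := 2)
    (by rw [Nat.cast_ofNat, ← map_ofNat (Ideal.Quotient.mk _), Ideal.Quotient.mk_singleton_self])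
    (isIdempotentElem_quotient_span_two hrank ha2 hab hb2 hta htb _) htop
  have hcard := natCard_quotient_span_natCast (A := 𝓞 K) 2
  rw [hrank, Nat.cast_ofNat] at hcard
  omega
end
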